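/- Let z be a class of admissible type, with associated derivation ∂_z. If f ∈ Λ^i_{≥1} is homogeneous of degree i and q^{A_*}·f is invertible in Λ_{≥0}, then ∂_z f lies in q^{A_*}·f + Λ_{≥1} and is invertible in Λ. Consequently the Schwarzian S_z f = ∂_z(∂_z∂_z f·(∂_z f)⁻¹) − (1/2)·(∂_z∂_z f·(∂_z f)⁻¹)² is well defined for such f, and it lies in Λ⁴_{≥0}. -/

import Mathlib

namespace Nov

/-- The lattice `H = ℤ^{r+2}`. -/
abbrev H (r : ℕ) : Type := Fin (r + 2) → ℤ

/-- The delta function `q^{A₀}` at `A₀ ∈ H`. -/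
noncomputable def delta {r : ℕ} (A₀ : H r) : H r → ℚ :=
  fun A => if A = A₀ then 1 else 0

/-- The unit element `q^0` of the Novikov ring. -/
noncomputable def one (r : ℕ) : H r → ℚ := delta (0 : H r)

/-- The convolution product `(x·y)(A) = ∑_{A₁+A₂=A} x(A₁)·y(A₂)`. -/
noncomputable def mul {r : ℕ} (x y : H r → ℚ) : H r → ℚ :=
  fun A => ∑ᶠ B : H r, x B * y (A - B)

/-- The degree-2 derivation `(∂_z x)(A) = ∑_{A₁+A₂=A} z_{A₁}(A₂)·x(A₂)`
associated to a family `z` of additive maps `H → ℚ`. -/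
noncomputable def dz {r : ℕ} (z : H r → (H r →+ ℚ)) (x : H r → ℚ) : H r → ℚ :=
  fun A => ∑ᶠ B : H r, z (A - B) B * x B

/-- The `ν`-finiteness condition: for every `C`, only finitely many support
elements `A` with `ν(A) ≤ C`. -/
def NuFinite {r : ℕ} (ν : H r →+ ℤ) (x : H r → ℚ) : Prop :=
  ∀ C : ℤ, {A : H r | x A ≠ 0 ∧ ν A ≤ C}.Finite

/-- Membership in the homogeneous piece `Λ^i`: support in `{2μ = i}` plus
`ν`-finiteness. -/
def MemHom {r : ℕ} (μ ν : H r →+ ℤ) (i : ℤ) (x : H r → ℚ) : Prop :=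
  (∀ A, x A ≠ 0 → 2 * μ A = i) ∧ NuFinite ν x

/-- Membership in `Λ = ⊕_i Λ^i`: `ν`-finiteness plus finitely many occurring
degrees. -/
def MemLambda {r : ℕ} (μ ν : H r →+ ℤ) (x : H r → ℚ) : Prop :=
  NuFinite ν x ∧ ({i : ℤ | ∃ A, x A ≠ 0 ∧ 2 * μ A = i}).Finite

/-- Support contained in `{ν ≥ k}` (membership in `Λ_{≥k}`, for elements of
`Λ`). -/
def MemGE {r : ℕ} (ν : H r →+ ℤ) (k : ℤ) (x : H r → ℚ) : Prop :=
  ∀ A, x A ≠ 0 → k ≤ ν A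

/-- A class `z` of admissible type: supported on `{μ = 1}`, `ν`-finite, equal
to `ν` at `A_*`, and vanishing on all `A₁ ≠ A_*` with `ν(A₁) < 0`. -/
structure Admissible {r : ℕ} (μ ν : H r →+ ℤ) (Astar : H r)
    (z : H r → (H r →+ ℚ)) : Prop where
  supp_mu : ∀ A₁, z A₁ ≠ 0 → μ A₁ = 1
  nu_fin : ∀ C : ℤ, {A₁ : H r | z A₁ ≠ 0 ∧ ν A₁ ≤ C}.Finite
  at_star : ∀ A, z Astar A = (ν A : ℚ)
  vanish_neg : ∀ A₁, A₁ ≠ Astar → ν A₁ < 0 → z A₁ = 0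

open scoped Classical in
/-- The (two-sided) inverse of `x` within `Λ`, chosen if it exists. -/
noncomputable def invN {r : ℕ} (μ ν : H r →+ ℤ) (x : H r → ℚ) : H r → ℚ :=
  if h : ∃ y, MemLambda μ ν y ∧ mul x y = one r ∧ mul y x = one r then
    h.choose
  else 0

/-- The Schwarzian
`S_z f = ∂_z(∂_z∂_z f·(∂_z f)⁻¹) − (1/2)·(∂_z∂_z f·(∂_z f)⁻¹)²`. -/
noncomputable def Sz {r : ℕ} (μ ν : H r →+ ℤ) (z : H r → (H r →+ ℚ))
    (f : H r → ℚ) : H r → ℚ :=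
  dz z (mul (dz z (dz z f)) (invN μ ν (dz z f)))
    - (1 / 2 : ℚ) •
        mul (mul (dz z (dz z f)) (invN μ ν (dz z f)))
          (mul (dz z (dz z f)) (invN μ ν (dz z f)))

end Nov

/-!
Put `g = q^{A_*} f`. Since `z_{A₁} = 0` for `A₁ ≠ A_*` with `ν(A₁) < 0`, in `ν`-degrees `≤ 0`
only the `A_*`-term of `∂_z f` survives, and it equals `ν(A - A_*) f(A - A_*) = g(A)` because
`f ∈ Λ_{≥1}` forces `ν(A - A_*) = 1`. Hence `∂_z f - g ∈ Λ_{≥1}` and, with `y = g⁻¹ ∈ Λ_{≥0}`,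
`∂_z f = g (1 - v)` for `v = y (g - ∂_z f) ∈ Λ_{≥1}`, whose inverse is the geometric series
`∑ vⁿ`: its `n`-th term lies in `Λ_{≥n}`, so the series is finite in each `ν`-degree.
The inverse of a homogeneous element is homogeneous, and `∂_z` raises the degree by `2` and
preserves `Λ_{≥0}`, so `S_z f ∈ Λ⁴_{≥0}`.
-/

open Function Pointwise

theorem exists_ne_zero_of_finsum_ne_zero {ι M : Type*} [AddCommMonoid M] {f : ι → M}
    (h : ∑ᶠ i, f i ≠ 0) : ∃ i, f i ≠ 0 :=
  not_forall.mp fun h' => h (finsum_eq_zero_of_forall_eq_zero h')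

theorem finsum_comm_of_finite {α β M : Type*} [AddCommMonoid M] (f : α → β → M)
    (hf : (support (uncurry f)).Finite) : ∑ᶠ a, ∑ᶠ b, f a b = ∑ᶠ b, ∑ᶠ a, f a b := by
  have h₁ := finsum_curry (uncurry f) hf
  have h₂ := finsum_curry (uncurry (flip f)) (hf.preimage Prod.swap_injective.injOn)
  simp only [uncurry_apply_pair, flip] at h₁ h₂
  rw [← h₁, ← h₂]
  exact (finsum_comp_equiv (Equiv.prodComm _ _)).symm

theorem finsum_nat_eq_add_finsum_succ {M : Type*} [AddCommMonoid M] {f : ℕ → M}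
    (hf : (support f).Finite) : ∑ᶠ n, f n = f 0 + ∑ᶠ n, f (n + 1) := by
  obtain ⟨N, hN⟩ := hf.bddAbove
  rw [finsum_eq_sum_of_support_subset f (s := Finset.range (N + 1))
      fun n hn => by simpa [Nat.lt_succ_iff] using hN hn,
    finsum_eq_sum_of_support_subset (fun n => f (n + 1)) (s := Finset.range N)
      fun n hn => by simpa using hN hn,
    Finset.sum_range_succ', add_comm]

namespace Nov

def IsHomogeneous {r : ℕ} (μ : H r →+ ℤ) (d : ℤ) (x : H r → ℚ) : Prop :=
  ∀ A, x A ≠ 0 → 2 * μ A = d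

variable {r : ℕ} {μ ν : H r →+ ℤ} {Astar : H r} {z : H r → (H r →+ ℚ)} {x y w : H r → ℚ}

theorem exists_ne_zero_of_mul_ne_zero {A : H r} (h : mul x y A ≠ 0) :
    ∃ B, x B ≠ 0 ∧ y (A - B) ≠ 0 := by
  obtain ⟨B, hB⟩ := exists_ne_zero_of_finsum_ne_zero h
  exact ⟨B, left_ne_zero_of_mul hB, right_ne_zero_of_mul hB⟩

theorem exists_ne_zero_of_dz_ne_zero {A : H r} (h : dz z x A ≠ 0) :
    ∃ B, z (A - B) ≠ 0 ∧ z (A - B) B ≠ 0 ∧ x B ≠ 0 := by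
  obtain ⟨B, hB⟩ := exists_ne_zero_of_finsum_ne_zero h
  have hzB := left_ne_zero_of_mul hB
  exact ⟨B, fun h0 => hzB (by simp [h0]), hzB, right_ne_zero_of_mul hB⟩

theorem ne_zero_or_ne_zero_of_sub_ne_zero {A : H r} (h : (x - y) A ≠ 0) : x A ≠ 0 ∨ y A ≠ 0 := by
  by_contra! h'
  simp [h'] at h

theorem Admissible.nu_nonneg (hz : Admissible μ ν Astar z) {C : H r} (hC : z C ≠ 0)
    (hne : C ≠ Astar) : 0 ≤ ν C :=
  not_lt.1 fun h => hC (hz.vanish_neg C hne h)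

theorem Admissible.neg_one_le_nu (hz : Admissible μ ν Astar z) (hνA : ν Astar = -1) {C : H r}
    (hC : z C ≠ 0) : -1 ≤ ν C := by
  rcases eq_or_ne C Astar with rfl | hne
  · exact hνA.ge
  · linarith [hz.nu_nonneg hC hne]

theorem eq_of_delta_ne_zero {A₀ A : H r} (h : delta A₀ A ≠ 0) : A = A₀ :=
  by_contra fun hne => h (if_neg hne)

theorem MemGE.mono {k l : ℤ} (hx : MemGE ν l x) (h : k ≤ l) : MemGE ν k x :=
  fun A hA => h.trans (hx A hA)

theorem MemGE.sub {k : ℤ} (hx : MemGE ν k x) (hy : MemGE ν k y) : MemGE ν k (x - y) :=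
  fun A hA => (ne_zero_or_ne_zero_of_sub_ne_zero hA).elim (hx A) (hy A)

theorem MemGE.neg {k : ℤ} (hx : MemGE ν k x) : MemGE ν k (-x) :=
  fun A hA => hx A (neg_ne_zero.1 hA)

theorem MemGE.smul {k : ℤ} (hx : MemGE ν k x) (c : ℚ) : MemGE ν k (c • x) :=
  fun A hA => hx A (right_ne_zero_of_mul hA)

theorem MemGE.mul {k l : ℤ} (hx : MemGE ν k x) (hy : MemGE ν l y) :
    MemGE ν (k + l) (mul x y) := fun A hA => by
  obtain ⟨B, hB, hAB⟩ := exists_ne_zero_of_mul_ne_zero hA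
  linarith [hx B hB, hy _ hAB, map_sub ν A B]

theorem memGE_delta (A₀ : H r) : MemGE ν (ν A₀) (delta A₀) := fun A hA => by
  rw [eq_of_delta_ne_zero hA]

theorem memGE_sub_of_eq {k : ℤ} (h : ∀ A, ν A < k → x A = y A) : MemGE ν k (x - y) :=
  fun A hA => not_lt.1 fun hlt => hA (sub_eq_zero.2 (h A hlt))

theorem IsHomogeneous.sub {d : ℤ} (hx : IsHomogeneous μ d x) (hy : IsHomogeneous μ d y) :
    IsHomogeneous μ d (x - y) :=
  fun A hA => (ne_zero_or_ne_zero_of_sub_ne_zero hA).elim (hx A) (hy A)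

theorem IsHomogeneous.smul {d : ℤ} (hx : IsHomogeneous μ d x) (c : ℚ) :
    IsHomogeneous μ d (c • x) :=
  fun A hA => hx A (right_ne_zero_of_mul hA)

theorem IsHomogeneous.mul {d e : ℤ} (hx : IsHomogeneous μ d x) (hy : IsHomogeneous μ e y) :
    IsHomogeneous μ (d + e) (mul x y) := fun A hA => by
  obtain ⟨B, hB, hAB⟩ := exists_ne_zero_of_mul_ne_zero hA
  linarith [hx B hB, hy _ hAB, map_sub μ A B]

theorem isHomogeneous_delta (A₀ : H r) : IsHomogeneous μ (2 * μ A₀) (delta A₀) := fun A hA => by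
  rw [eq_of_delta_ne_zero hA]

theorem NuFinite.mono (hx : NuFinite ν x) (h : ∀ A, y A ≠ 0 → x A ≠ 0) : NuFinite ν y :=
  fun C => (hx C).subset fun A hA => ⟨h A hA.1, hA.2⟩

theorem NuFinite.exists_memGE (hx : NuFinite ν x) : ∃ m, MemGE ν m x := by
  obtain ⟨m, hm⟩ := ((hx 0).image ν).bddBelow
  refine ⟨min m 0, fun A hA => ?_⟩
  by_cases h : ν A ≤ 0
  · exact min_le_of_left_le (hm ⟨A, ⟨hA, h⟩, rfl⟩)
  · exact (min_le_right m 0).trans (le_of_not_ge h)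

theorem NuFinite.sub (hx : NuFinite ν x) (hy : NuFinite ν y) : NuFinite ν (x - y) := fun C =>
  ((hx C).union (hy C)).subset fun _ ⟨hA, hC⟩ =>
    (ne_zero_or_ne_zero_of_sub_ne_zero hA).imp (⟨·, hC⟩) (⟨·, hC⟩)

theorem NuFinite.smul (hx : NuFinite ν x) (c : ℚ) : NuFinite ν (c • x) :=
  hx.mono fun _ hA => right_ne_zero_of_mul hA

theorem nuFinite_delta (A₀ : H r) : NuFinite ν (delta A₀) := fun _ =>
  (Set.finite_singleton A₀).subset fun _ hA => eq_of_delta_ne_zero hA.1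

theorem nuFinite_one : NuFinite ν (one r) :=
  nuFinite_delta 0

theorem NuFinite.mul (hx : NuFinite ν x) (hy : NuFinite ν y) : NuFinite ν (mul x y) := by
  intro C
  obtain ⟨mx, hmx⟩ := hx.exists_memGE
  obtain ⟨my, hmy⟩ := hy.exists_memGE
  refine ((hx (C - my)).add (hy (C - mx))).subset fun A ⟨hA, hC⟩ => ?_
  obtain ⟨B, hB, hAB⟩ := exists_ne_zero_of_mul_ne_zero hA
  have := map_sub ν A B
  exact ⟨B, ⟨hB, by linarith [hmy _ hAB]⟩, A - B, ⟨hAB, by linarith [hmx B hB]⟩, add_sub_cancel B A⟩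

theorem IsHomogeneous.memLambda {d : ℤ} (h : IsHomogeneous μ d x) (hx : NuFinite ν x) :
    MemLambda μ ν x :=
  ⟨hx, (Set.finite_singleton d).subset fun _ ⟨A, hA, hd⟩ => hd ▸ h A hA⟩

theorem finite_support_conv (hx : NuFinite ν x) (hy : NuFinite ν y) (A : H r) :
    (support fun B => x B * y (A - B)).Finite := by
  obtain ⟨m, hm⟩ := hy.exists_memGE
  refine (hx (ν A - m)).subset fun B hB => ⟨left_ne_zero_of_mul hB, ?_⟩
  linarith [hm _ (right_ne_zero_of_mul hB), map_sub ν A B]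

theorem delta_mul (A₀ : H r) (x : H r → ℚ) : mul (delta A₀) x = fun A => x (A - A₀) := by
  funext A
  rw [mul, finsum_eq_single _ A₀ fun B hB => by simp [delta, hB]]
  simp [delta]

theorem mul_one (x : H r → ℚ) : mul x (one r) = x := by
  funext A
  rw [mul, finsum_eq_single _ A fun B hB => by simp [one, delta, sub_eq_zero, Ne.symm hB]]
  simp [one, delta]

theorem mul_comm (x y : H r → ℚ) : mul x y = mul y x := by
  funext A
  rw [mul, mul, ← finsum_comp_equiv (Equiv.subLeft A)]
  exact finsum_congr fun B => by simp [_root_.mul_comm]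

theorem one_mul (x : H r → ℚ) : mul (one r) x = x := by
  rw [mul_comm, mul_one]

theorem mul_zero (x : H r → ℚ) : mul x 0 = 0 := by
  funext A
  simp [mul]

theorem mul_sub (hx : NuFinite ν x) (hy : NuFinite ν y) (hw : NuFinite ν w) :
    mul x (y - w) = mul x y - mul x w := by
  funext A
  rw [Pi.sub_apply, mul, mul, mul,
    ← finsum_sub_distrib (finite_support_conv hx hy A) (finite_support_conv hx hw A)]
  simp only [Pi.sub_apply, _root_.mul_sub]

theorem mul_assoc (hx : NuFinite ν x) (hy : NuFinite ν y) (hw : NuFinite ν w) :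
    mul (mul x y) w = mul x (mul y w) := by
  funext A
  obtain ⟨mx, hmx⟩ := hx.exists_memGE
  obtain ⟨my, hmy⟩ := hy.exists_memGE
  obtain ⟨mw, hmw⟩ := hw.exists_memGE
  have hfin : (support (uncurry fun B C => x C * y (B - C) * w (A - B))).Finite := by
    refine (((hx (ν A - my - mw)).add (hy (ν A - mx - mw))).prod (hx (ν A - my - mw))).subset ?_
    rintro ⟨B, C⟩ h
    have hC := left_ne_zero_of_mul (left_ne_zero_of_mul h)
    have hBC := right_ne_zero_of_mul (left_ne_zero_of_mul h)
    have hAB := right_ne_zero_of_mul h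
    have := hmx C hC; have := hmy _ hBC; have := hmw _ hAB
    have := map_sub ν B C; have := map_sub ν A B
    exact ⟨⟨C, ⟨hC, by linarith⟩, B - C, ⟨hBC, by linarith⟩, add_sub_cancel C B⟩, hC, by linarith⟩
  calc mul (mul x y) w A = ∑ᶠ B, ∑ᶠ C, x C * y (B - C) * w (A - B) := by
        simp only [mul, finsum_mul]
    _ = ∑ᶠ C, ∑ᶠ B, x C * y (B - C) * w (A - B) := finsum_comm_of_finite _ hfin
    _ = ∑ᶠ C, ∑ᶠ D, x C * (y D * w (A - C - D)) := finsum_congr fun C => by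
        rw [← finsum_comp_equiv (Equiv.addLeft C)]
        simp [sub_add_eq_sub_sub, _root_.mul_assoc]
    _ = mul x (mul y w) A := by simp only [mul, mul_finsum]

theorem eq_of_mul_eq_one (hx : NuFinite ν x) (hy : NuFinite ν y) (hw : NuFinite ν w)
    (hxy : mul x y = one r) (hxw : mul x w = one r) : y = w :=
  calc y = mul (mul x w) y := by rw [hxw, one_mul]
    _ = mul (mul x y) w := by rw [mul_assoc hx hw hy, mul_comm w, ← mul_assoc hx hy hw]
    _ = w := by rw [hxy, one_mul]

theorem invN_eq (hx : NuFinite ν x) (hy : MemLambda μ ν y) (h : mul x y = one r) :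
    invN μ ν x = y := by
  have hex : ∃ y, MemLambda μ ν y ∧ mul x y = one r ∧ mul y x = one r :=
    ⟨y, hy, h, by rw [mul_comm, h]⟩
  rw [invN, dif_pos hex]
  exact eq_of_mul_eq_one hx hex.choose_spec.1.1 hy.1 hex.choose_spec.2.1 h

theorem isHomogeneous_of_mul_eq_one {d : ℤ} (hxd : IsHomogeneous μ d x) (hx : NuFinite ν x)
    (hy : NuFinite ν y) (h : mul x y = one r) : IsHomogeneous μ (-d) y := by
  classical
  -- `y'` is the part of `y` off degree `-d`: `x y'` lives off degree `0`, where `x y = 1`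
  -- vanishes, so `x y' = 0` and hence `y' = y (x y') = 0`.
  set y' : H r → ℚ := fun A => if 2 * μ A = -d then 0 else y A with hy'
  have hy'Nu : NuFinite ν y' := hy.mono fun A hA h0 => hA (by simp [y', h0])
  have hxy' : mul x y' = 0 := by
    funext A
    by_cases hA : 2 * μ A = 0
    · refine finsum_eq_zero_of_forall_eq_zero fun B => ?_
      by_cases hB : x B = 0
      · simp [hB]
      · have := hxd B hB; have := map_sub μ A B
        simp only [hy', if_pos (show 2 * μ (A - B) = -d by omega), MulZeroClass.mul_zero]
    · have hA0 : A ≠ 0 := by rintro rfl; simp at hA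
      calc mul x y' A = mul x y A := finsum_congr fun B => by
            by_cases hB : x B = 0
            · simp [hB]
            · have := hxd B hB; have := map_sub μ A B
              simp only [hy', if_neg (show 2 * μ (A - B) ≠ -d by omega)]
        _ = 0 := by simp [h, one, delta, hA0]
  have hy'0 : y' = 0 :=
    calc y' = mul (mul x y) y' := by rw [h, one_mul]
      _ = 0 := by rw [mul_comm x, mul_assoc hy hx hy'Nu, hxy', mul_zero]
  intro A hA
  by_contra hne
  simpa [y', hne, hA] using congrFun hy'0 A

noncomputable def npow (v : H r → ℚ) : ℕ → H r → ℚ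
  | 0 => one r
  | n + 1 => mul v (npow v n)

noncomputable def geom (v : H r → ℚ) : H r → ℚ := fun A => ∑ᶠ n, npow v n A

section GeometricSeries

variable {v : H r → ℚ}

theorem NuFinite.npow (hv : NuFinite ν v) : ∀ n, NuFinite ν (npow v n)
  | 0 => nuFinite_one
  | n + 1 => hv.mul (hv.npow n)

theorem MemGE.npow (hv : MemGE ν 1 v) : ∀ n : ℕ, MemGE ν n (npow v n)
  | 0 => memGE_delta (0 : H r) |>.mono (by simp)
  | n + 1 => (hv.mul (hv.npow n)).mono (by push_cast; omega)

theorem le_nu_of_npow_ne_zero (hv : MemGE ν 1 v) {n : ℕ} {A : H r} (h : npow v n A ≠ 0) :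
    n ≤ (ν A).toNat := by
  have := hv.npow n A h
  omega

theorem finite_support_npow_apply (hv : MemGE ν 1 v) (A : H r) :
    (support fun n => npow v n A).Finite :=
  (Set.finite_Iic (ν A).toNat).subset fun _ hn => le_nu_of_npow_ne_zero hv hn

theorem NuFinite.geom (hv : NuFinite ν v) (hv1 : MemGE ν 1 v) : NuFinite ν (geom v) := by
  intro C
  refine (Set.Finite.biUnion (Set.finite_Iic C.toNat) fun n _ => hv.npow n C).subset ?_
  rintro A ⟨hA, hC⟩
  obtain ⟨n, hn⟩ := exists_ne_zero_of_finsum_ne_zero hA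
  have := le_nu_of_npow_ne_zero hv1 hn
  exact Set.mem_biUnion (show n ≤ C.toNat by omega) ⟨hn, hC⟩

theorem MemGE.geom (hv : MemGE ν 1 v) : MemGE ν 0 (geom v) := fun A hA => by
  obtain ⟨n, hn⟩ := exists_ne_zero_of_finsum_ne_zero hA
  have := hv.npow n A hn
  omega

theorem mul_geom (hv : NuFinite ν v) (hv1 : MemGE ν 1 v) :
    mul v (geom v) = fun A => ∑ᶠ n, npow v (n + 1) A := by
  funext A
  have hfin : (support (uncurry fun B n => v B * npow v n (A - B))).Finite := by
    refine ((hv (ν A)).prod (Set.finite_Iic (ν A).toNat)).subset ?_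
    rintro ⟨B, n⟩ (h : v B * npow v n (A - B) ≠ 0)
    have hB := hv1 B (left_ne_zero_of_mul h)
    have hn := hv1.npow n _ (right_ne_zero_of_mul h)
    have := map_sub ν A B
    simp only [Set.mem_prod, Set.mem_Iic]
    exact ⟨⟨left_ne_zero_of_mul h, by omega⟩, by omega⟩
  calc mul v (geom v) A = ∑ᶠ B, ∑ᶠ n, v B * npow v n (A - B) := by simp only [mul, geom, mul_finsum]
    _ = ∑ᶠ n, npow v (n + 1) A := finsum_comm_of_finite _ hfin

theorem one_sub_mul_geom (hv : NuFinite ν v) (hv1 : MemGE ν 1 v) :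
    mul (one r - v) (geom v) = one r := by
  rw [mul_comm, mul_sub (hv.geom hv1) nuFinite_one hv, mul_one, mul_comm _ v,
    mul_geom hv hv1]
  funext A
  rw [Pi.sub_apply, geom, finsum_nat_eq_add_finsum_succ (finite_support_npow_apply hv1 A),
    add_sub_cancel_right]
  rfl

end GeometricSeries

theorem exists_mul_eq_one_of_sub_memGE_one {g : H r → ℚ} (hx : NuFinite ν x)
    (hg : NuFinite ν g) (hy : NuFinite ν y) (hy0 : MemGE ν 0 y) (hgy : mul g y = one r)
    (hxg : MemGE ν 1 (x - g)) : ∃ w, NuFinite ν w ∧ MemGE ν 0 w ∧ mul x w = one r := by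
  set v := mul y (g - x)
  have hvNu : NuFinite ν v := hy.mul (hg.sub hx)
  have hv1 : MemGE ν 1 v := (hy0.mul (neg_sub x g ▸ hxg.neg)).mono (by norm_num)
  have h1v : NuFinite ν (one r - v) := nuFinite_one.sub hvNu
  have hfactor : x = mul g (one r - v) := by
    rw [mul_sub hg nuFinite_one hvNu, mul_one, ← mul_assoc hg hy (hg.sub hx), hgy, one_mul,
      sub_sub_cancel]
  refine ⟨mul (geom v) y, (hvNu.geom hv1).mul hy, hv1.geom.mul hy0, ?_⟩
  rw [hfactor, mul_assoc hg h1v ((hvNu.geom hv1).mul hy), ← mul_assoc h1v (hvNu.geom hv1) hy,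
    one_sub_mul_geom hvNu hv1, one_mul, hgy]

theorem NuFinite.dz (hz : Admissible μ ν Astar z) (hνA : ν Astar = -1) (hx : NuFinite ν x) :
    NuFinite ν (dz z x) := by
  intro C
  obtain ⟨m, hm⟩ := hx.exists_memGE
  refine ((hz.nu_fin (C - m)).add (hx (C + 1))).subset fun A ⟨hA, hC⟩ => ?_
  obtain ⟨B, hzAB, -, hB⟩ := exists_ne_zero_of_dz_ne_zero hA
  have := map_sub ν A B
  exact ⟨A - B, ⟨hzAB, by linarith [hm B hB]⟩, B,
    ⟨hB, by linarith [hz.neg_one_le_nu hνA hzAB]⟩, sub_add_cancel A B⟩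

theorem IsHomogeneous.dz (hz : Admissible μ ν Astar z) {d : ℤ} (hx : IsHomogeneous μ d x) :
    IsHomogeneous μ (d + 2) (dz z x) := fun A hA => by
  obtain ⟨B, hzAB, -, hB⟩ := exists_ne_zero_of_dz_ne_zero hA
  linarith [hz.supp_mu _ hzAB, hx B hB, map_sub μ A B]

theorem MemGE.dz (hz : Admissible μ ν Astar z) (hνA : ν Astar = -1) (hx : MemGE ν 0 x) :
    MemGE ν 0 (dz z x) := fun A hA => by
  obtain ⟨B, hzAB, hzB, hB⟩ := exists_ne_zero_of_dz_ne_zero hA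
  have hsub := map_sub ν A B
  rcases eq_or_ne (A - B) Astar with hAB | hAB
  · -- the `A_*` term is `ν B · x B`, so it needs `ν B ≠ 0`, i.e. `ν B ≥ 1`
    rw [hAB, hz.at_star] at hzB
    rw [hAB, hνA] at hsub
    have : ν B ≠ 0 := fun h0 => hzB (by simp [h0])
    have := hx B hB
    omega
  · linarith [hz.nu_nonneg hzAB hAB, hx B hB]

theorem dz_apply_of_nu_nonpos (hz : Admissible μ ν Astar z) (hνA : ν Astar = -1)
    (hx : MemGE ν 1 x) {A : H r} (hA : ν A ≤ 0) :
    dz z x A = x (A - Astar) := by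
  rw [dz, finsum_eq_single _ (A - Astar) fun B hBA => ?_]
  · rw [sub_sub_cancel, hz.at_star]
    by_cases h : x (A - Astar) = 0
    · simp [h]
    · have := hx _ h
      have := map_sub ν A Astar
      simp [show ν (A - Astar) = 1 by omega]
  · by_cases hB : x B = 0
    · simp [hB]
    by_cases hzAB : z (A - B) = 0
    · simp [hzAB]
    have hAB : A - B ≠ Astar := fun h => hBA (by rw [← h, sub_sub_cancel])
    have := map_sub ν A B
    linarith [hz.nu_nonneg hzAB hAB, hx B hB]

theorem memGE_one_dz_sub_mul_delta (hz : Admissible μ ν Astar z) (hνA : ν Astar = -1)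
    (hx : MemGE ν 1 x) : MemGE ν 1 (dz z x - mul (delta Astar) x) :=
  memGE_sub_of_eq fun A hA => by
    rw [dz_apply_of_nu_nonpos hz hνA hx (by omega), delta_mul]

theorem Sz_mem_of_invN_eq (hz : Admissible μ ν Astar z) (hνA : ν Astar = -1) {i : ℤ} {f w : H r → ℚ}
    (hfH : IsHomogeneous μ i f) (hfNu : NuFinite ν f) (hf0 : MemGE ν 0 f)
    (hwH : IsHomogeneous μ (-(i + 2)) w) (hwNu : NuFinite ν w) (hw0 : MemGE ν 0 w)
    (hinv : invN μ ν (dz z f) = w) :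
    MemHom μ ν 4 (Sz μ ν z f) ∧ MemGE ν 0 (Sz μ ν z f) := by
  rw [Sz, hinv]
  set h := mul (dz z (dz z f)) w
  have hNu : NuFinite ν h := ((hfNu.dz hz hνA).dz hz hνA).mul hwNu
  have hH : IsHomogeneous μ 2 h := by
    convert ((hfH.dz hz).dz hz).mul hwH using 1
    ring
  have h0 : MemGE ν 0 h := ((hf0.dz hz hνA).dz hz hνA).mul hw0
  exact ⟨⟨(hH.dz hz).sub ((hH.mul hH).smul _), (hNu.dz hz hνA).sub ((hNu.mul hNu).smul _)⟩,
    (h0.dz hz hνA).sub ((h0.mul h0).smul _)⟩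

end Nov

open Nov in
/-- If `f ∈ Λ^i_{≥1}` is homogeneous and `q^{A_*}·f` is invertible in
`Λ_{≥0}`, then `∂_z f` lies in `q^{A_*}·f + Λ_{≥1}` and is invertible in `Λ`;
consequently the Schwarzian `S_z f` is well defined and lies in `Λ⁴_{≥0}`. -/
theorem schwarzian_well_defined (r : ℕ) (μ ν : H r →+ ℤ) (Astar : H r)
    (hμA : μ Astar = 1) (hνA : ν Astar = -1)
    (z : H r → (H r →+ ℚ)) (hz : Admissible μ ν Astar z)
    (i : ℤ) (f : H r → ℚ)
    (hf : MemHom μ ν i f) (hge : MemGE ν 1 f)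
    (hinv : ∃ y, MemLambda μ ν y ∧ MemGE ν 0 y ∧
        mul (mul (delta Astar) f) y = one r ∧
        mul y (mul (delta Astar) f) = one r) :
    (MemLambda μ ν (dz z f - mul (delta Astar) f) ∧
      MemGE ν 1 (dz z f - mul (delta Astar) f)) ∧
    (∃ g, MemLambda μ ν g ∧ mul (dz z f) g = one r ∧ mul g (dz z f) = one r) ∧
    (MemHom μ ν 4 (Sz μ ν z f) ∧ MemGE ν 0 (Sz μ ν z f)) := by
  obtain ⟨hfH : IsHomogeneous μ i f, hfNu⟩ := hf
  obtain ⟨y, hy, hy0, hgy, -⟩ := hinv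
  set g := mul (delta Astar) f
  have hgNu : NuFinite ν g := (nuFinite_delta Astar).mul hfNu
  have hgH : IsHomogeneous μ (i + 2) g := by
    convert (isHomogeneous_delta Astar).mul hfH using 1
    rw [hμA]; ring
  have hdfNu : NuFinite ν (dz z f) := hfNu.dz hz hνA
  have hdfH : IsHomogeneous μ (i + 2) (dz z f) := hfH.dz hz
  have he1 : MemGE ν 1 (dz z f - g) := memGE_one_dz_sub_mul_delta hz hνA hge
  obtain ⟨w, hwNu, hw0, hw⟩ := exists_mul_eq_one_of_sub_memGE_one hdfNu hgNu hy.1 hy0 hgy he1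
  have hwH : IsHomogeneous μ (-(i + 2)) w := isHomogeneous_of_mul_eq_one hdfH hdfNu hwNu hw
  refine ⟨⟨(hdfH.sub hgH).memLambda (hdfNu.sub hgNu), he1⟩,
    ⟨w, hwH.memLambda hwNu, hw, by rw [Nov.mul_comm, hw]⟩, ?_⟩
  exact Sz_mem_of_invN_eq hz hνA hfH hfNu (hge.mono zero_le_one) hwH hwNu hw0
    (invN_eq hdfNu (hwH.memLambda hwNu) hw)
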